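/- arXiv:1604.02014 — 2 statements merged into one kernel-verified Lean document; each statement's English description precedes it below -/
import Mathlib

section
/- Fix ε > 0 and a locally finite Borel measure μ on ℝ^d. If Q belongs to 𝒟_sel(μ) (i.e., Q cannot be dominated from above by any other cube in 𝒟), then for every M > 1 one has μ(MQ) ≤ C M^{s+ε} μ(Q) for a constant C depending only on d, s, ε. -/
open MeasureTheory Metric Set Filter ENNReal
noncomputable section

/-- Points of `ℝ^d` with the Euclidean metric. -/
abbrev Pt (d : ℕ) := EuclideanSpace ℝ (Fin d)

/-- The open cube in `ℝ^d` with center `c` (given coordinatewise) and side length `l`. -/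
def cubeSet {d : ℕ} (c : Fin d → ℝ) (l : ℝ) : Set (Pt d) := {x | ∀ i, |x i - c i| < l / 2}

/-- The lattice of concentric triples of standard dyadic cubes, each cube recorded as the
pair (center, side length). -/
def triples (d : ℕ) : Set ((Fin d → ℝ) × ℝ) :=
  {p | ∃ (n : ℤ) (m : Fin d → ℤ), p.2 = 3 * 2 ^ n ∧ ∀ i, p.1 i = (2:ℝ) ^ n * (m i + 1 / 2)}

/-- The s-dimensional density `μ(Q)/ℓ(Q)^s` of a cube. -/
def DensR {d : ℕ} (μ : Measure (Pt d)) (s : ℝ) (p : (Fin d → ℝ) × ℝ) : ℝ :=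
  (μ (cubeSet p.1 p.2)).toReal / p.2 ^ s

/-- `[Q':Q] = |log₂(ℓ(Q')/ℓ(Q))|`, as a function of the two side lengths. -/
def ratio (l l' : ℝ) : ℝ := |Real.logb 2 (l' / l)|

/-- `Q'` dominates `Q` from above: `Q' ⊇ Q` and `D(Q') ≥ 2^{ε[Q':Q]} D(Q)`. -/
def DomAbove {d : ℕ} (μ : Measure (Pt d)) (s ε : ℝ) (Q' Q : (Fin d → ℝ) × ℝ) : Prop :=
  cubeSet Q.1 Q.2 ⊆ cubeSet Q'.1 Q'.2 ∧
  (2:ℝ) ^ (ε * ratio Q.2 Q'.2) * DensR μ s Q ≤ DensR μ s Q'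

/-- The selected cubes: those in the lattice that cannot be dominated from above by
another cube of the lattice. -/
def Dsel {d : ℕ} (μ : Measure (Pt d)) (s ε : ℝ) : Set ((Fin d → ℝ) × ℝ) :=
  {Q ∈ triples d | ¬ ∃ Q' ∈ triples d, Q' ≠ Q ∧ DomAbove μ s ε Q' Q}

/-! Let `Q` be the triple of a dyadic cube of side `2^n`, and choose `k` with `2M ≤ 2^k ≤ 4M`.
The triple `Q'` of its dyadic ancestor of side `2^(n+k)` contains `MQ`, because the two centres
differ by at most `(2^(n+k) - 2^n)/2` in each coordinate. As `Q` is selected, `Q'` does not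
dominate it: `μ(Q') / (2^k ℓ(Q))^s < 2^{εk} μ(Q) / ℓ(Q)^s`. Hence
`μ(MQ) ≤ μ(Q') < 2^{k(s+ε)} μ(Q) ≤ (4M)^{s+ε} μ(Q)`. -/

lemma measure_cubeSet_lt_top {d : ℕ} (μ : Measure (Pt d)) [IsLocallyFiniteMeasure μ]
    (c : Fin d → ℝ) (l : ℝ) : μ (cubeSet c l) < ⊤ := by
  have hsub : cubeSet c l ⊆ closedBall (WithLp.toLp 2 c : Pt d) (√(d * (l / 2) ^ 2)) := by
    intro x hx
    rw [mem_closedBall, EuclideanSpace.dist_eq]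
    gcongr
    calc ∑ i, dist (x i) (c i) ^ 2 ≤ ∑ _i : Fin d, (l / 2) ^ 2 := by
          gcongr with i
          rw [Real.dist_eq]
          exact (hx i).le
      _ = d * (l / 2) ^ 2 := by simp
  exact (measure_mono hsub).trans_lt measure_closedBall_lt_top

lemma cubeSet_subset_cubeSet {d : ℕ} {c c' : Fin d → ℝ} {l l' : ℝ}
    (h : ∀ i, |c i - c' i| + l / 2 ≤ l' / 2) : cubeSet c l ⊆ cubeSet c' l' := by
  intro x hx i
  linarith [abs_sub_le (x i) (c i) (c' i), hx i, h i]

/-- The triple of the dyadic cube `2^n (m + [0,1)^d)`. -/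
def dyadicTriple {d : ℕ} (n : ℤ) (m : Fin d → ℤ) : (Fin d → ℝ) × ℝ :=
  (fun i => (2:ℝ) ^ n * (m i + 1 / 2), 3 * 2 ^ n)

lemma dyadicTriple_mem_triples {d : ℕ} (n : ℤ) (m : Fin d → ℤ) :
    dyadicTriple n m ∈ triples d :=
  ⟨n, m, rfl, fun _ => rfl⟩

lemma exists_eq_dyadicTriple {d : ℕ} {p : (Fin d → ℝ) × ℝ} (hp : p ∈ triples d) :
    ∃ n m, p = dyadicTriple n m := by
  obtain ⟨n, m, hl, hc⟩ := hp
  exact ⟨n, m, Prod.ext (funext hc) hl⟩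

/-- The triple of the dyadic cube `2^(n+k) (⌊m / 2^k⌋ + [0,1)^d)`, the `k`-th dyadic ancestor
of `2^n (m + [0,1)^d)`. -/
def dyadicAncestor {d : ℕ} (k : ℕ) (n : ℤ) (m : Fin d → ℤ) : (Fin d → ℝ) × ℝ :=
  dyadicTriple (n + k) (m · / 2 ^ k)

lemma dyadicAncestor_snd {d : ℕ} (k : ℕ) (n : ℤ) (m : Fin d → ℤ) :
    (dyadicAncestor k n m).2 = (dyadicTriple n m).2 * 2 ^ k := by
  simp only [dyadicAncestor, dyadicTriple, zpow_add₀ (two_ne_zero' ℝ), zpow_natCast, mul_assoc]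

lemma dyadicAncestor_ne {d : ℕ} {k : ℕ} (hk : k ≠ 0) (n : ℤ) (m : Fin d → ℤ) :
    dyadicAncestor k n m ≠ dyadicTriple n m := fun h => by
  have hside := dyadicAncestor_snd k n m
  rw [h, dyadicTriple] at hside
  have h2k : (3:ℝ) * 2 ^ n * 2 ^ k = 3 * 2 ^ n * 1 := by rw [← hside, mul_one]
  exact (one_lt_pow₀ (one_lt_two : (1:ℝ) < 2) hk).ne' (mul_left_cancel₀ (by positivity) h2k)

lemma abs_center_sub_ancestor_center_le (n : ℤ) (k : ℕ) (m : ℤ) :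
    |(2:ℝ) ^ n * (m + 1 / 2) - 2 ^ (n + k) * ((m / 2 ^ k : ℤ) + 1 / 2)|
      ≤ ((2:ℝ) ^ (n + k) - 2 ^ n) / 2 := by
  have h2n : (0:ℝ) < 2 ^ n := zpow_pos two_pos n
  have hm : (m : ℝ) = 2 ^ k * ((m / 2 ^ k : ℤ) : ℝ) + ((m % 2 ^ k : ℤ) : ℝ) := by
    exact_mod_cast (Int.mul_ediv_add_emod m (2 ^ k)).symm
  have hr0 : (0:ℝ) ≤ ((m % 2 ^ k : ℤ) : ℝ) := by
    exact_mod_cast Int.emod_nonneg m (by positivity)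
  have hr1 : ((m % 2 ^ k : ℤ) : ℝ) + 1 ≤ 2 ^ k := by
    exact_mod_cast Int.emod_lt_of_pos m (show (0:ℤ) < 2 ^ k by positivity)
  rw [zpow_add₀ two_ne_zero, zpow_natCast, hm, abs_le]
  constructor <;> nlinarith [mul_nonneg h2n.le hr0, mul_le_mul_of_nonneg_left hr1 h2n.le]

lemma cubeSet_dilate_subset_ancestor {d : ℕ} {M : ℝ} (n : ℤ) (k : ℕ) (m : Fin d → ℤ)
    (hM : 3 * M ≤ 2 * 2 ^ k + 1) :
    cubeSet (dyadicTriple n m).1 (M * (dyadicTriple n m).2) ⊆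
      cubeSet (dyadicAncestor k n m).1 (dyadicAncestor k n m).2 := by
  refine cubeSet_subset_cubeSet fun i => ?_
  have hcenter := abs_center_sub_ancestor_center_le n k (m i)
  have h2n : (0:ℝ) < 2 ^ n := zpow_pos two_pos n
  simp only [dyadicAncestor, dyadicTriple, zpow_add₀ (two_ne_zero' ℝ), zpow_natCast] at hcenter ⊢
  nlinarith [mul_le_mul_of_nonneg_left hM h2n.le]

lemma ratio_mul_two_pow {l : ℝ} (hl : 0 < l) (k : ℕ) : ratio l (l * 2 ^ k) = k := by
  rw [ratio, mul_div_cancel_left₀ _ hl.ne', ← Real.rpow_natCast,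
    Real.logb_rpow two_pos (by norm_num), abs_of_nonneg k.cast_nonneg]

lemma lt_rpow_mul_of_div_rpow_lt {A B l t s ε : ℝ} (hl : 0 < l) (ht : 0 < t)
    (h : A / (l * t) ^ s < t ^ ε * (B / l ^ s)) : A < t ^ (s + ε) * B := by
  have hls : 0 < l ^ s := Real.rpow_pos_of_pos hl s
  have hts : 0 < t ^ s := Real.rpow_pos_of_pos ht s
  rw [Real.mul_rpow hl.le ht.le, div_lt_iff₀ (mul_pos hls hts)] at h
  rw [Real.rpow_add ht]
  calc A < t ^ ε * (B / l ^ s) * (l ^ s * t ^ s) := h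
    _ = t ^ s * t ^ ε * B := by field_simp

lemma densR_lt_of_mem_Dsel {d : ℕ} {μ : Measure (Pt d)} {s ε : ℝ} {Q Q' : (Fin d → ℝ) × ℝ}
    (hQ : Q ∈ Dsel μ s ε) (hQ' : Q' ∈ triples d) (hne : Q' ≠ Q)
    (hsub : cubeSet Q.1 Q.2 ⊆ cubeSet Q'.1 Q'.2) :
    DensR μ s Q' < 2 ^ (ε * ratio Q.2 Q'.2) * DensR μ s Q :=
  lt_of_not_ge fun h => hQ.2 ⟨Q', hQ', hne, hsub, h⟩

lemma measure_ancestor_lt_of_mem_Dsel {d : ℕ} {μ : Measure (Pt d)} {s ε : ℝ} {n : ℤ}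
    {m : Fin d → ℤ} (hQ : dyadicTriple n m ∈ Dsel μ s ε) {k : ℕ} (hk : k ≠ 0) :
    (μ (cubeSet (dyadicAncestor k n m).1 (dyadicAncestor k n m).2)).toReal
      < ((2:ℝ) ^ k) ^ (s + ε) * (μ (cubeSet (dyadicTriple n m).1 (dyadicTriple n m).2)).toReal := by
  set Q' := dyadicAncestor k n m
  set Q := dyadicTriple n m
  have hl : (0:ℝ) < Q.2 := by simp only [Q, dyadicTriple]; positivity
  have hside : Q'.2 = Q.2 * 2 ^ k := dyadicAncestor_snd k n m
  have hsub : cubeSet Q.1 Q.2 ⊆ cubeSet Q'.1 Q'.2 := by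
    simpa only [one_mul] using cubeSet_dilate_subset_ancestor (M := 1) n k m (by
      linarith [one_le_pow₀ (M₀ := ℝ) one_le_two (n := k)])
  have hdens := densR_lt_of_mem_Dsel (Q' := Q') hQ (dyadicTriple_mem_triples _ _)
    (dyadicAncestor_ne hk n m) hsub
  rw [hside, ratio_mul_two_pow hl, mul_comm ε, Real.rpow_natCast_mul two_pos.le, DensR, DensR,
    hside] at hdens
  rw [hside]
  exact lt_rpow_mul_of_div_rpow_lt hl (by positivity) hdens

lemma exists_two_pow_between {M : ℝ} (hM : 1 ≤ M) :
    ∃ k : ℕ, k ≠ 0 ∧ 2 * M ≤ 2 ^ k ∧ 2 ^ k ≤ 4 * M := by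
  obtain ⟨k, hlow, hup⟩ := exists_nat_pow_near (by linarith : 1 ≤ 2 * M) one_lt_two
  exact ⟨k + 1, k.succ_ne_zero, hup.le, by rw [pow_succ]; linarith⟩

lemma ENNReal.le_ofReal_mul_of_toReal_le {a b : ℝ≥0∞} {c : ℝ} (ha : a ≠ ⊤) (hb : b ≠ ⊤)
    (hc : 0 ≤ c) (h : a.toReal ≤ c * b.toReal) : a ≤ ENNReal.ofReal c * b := by
  rw [← ENNReal.ofReal_toReal ha, ← ENNReal.ofReal_toReal hb, ← ENNReal.ofReal_mul hc]
  exact ENNReal.ofReal_le_ofReal h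

/-- Selected cubes are doubling: if `Q ∈ 𝒟_sel(μ)` then `μ(MQ) ≤ C M^{s+ε} μ(Q)`. -/
theorem sel_doubling (d : ℕ) (s : ℝ) (hs : s ∈ Set.Ioo 0 (d : ℝ)) (ε : ℝ) (hε : 0 < ε) :
    ∃ C : ℝ, 0 < C ∧
      ∀ μ : Measure (Pt d), IsLocallyFiniteMeasure μ →
        ∀ Q ∈ Dsel μ s ε, ∀ M : ℝ, 1 < M →
          μ (cubeSet Q.1 (M * Q.2)) ≤ ENNReal.ofReal (C * M ^ (s + ε)) * μ (cubeSet Q.1 Q.2) := by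
  have hsε : 0 ≤ s + ε := by linarith [hs.1]
  refine ⟨4 ^ (s + ε), by positivity, fun μ _ Q hQ M hM => ?_⟩
  obtain ⟨n, m, rfl⟩ := exists_eq_dyadicTriple hQ.1
  obtain ⟨k, hk, hk_low, hk_up⟩ := exists_two_pow_between hM.le
  have hmass := measure_ancestor_lt_of_mem_Dsel hQ hk
  have hpow : ((2:ℝ) ^ k) ^ (s + ε) ≤ 4 ^ (s + ε) * M ^ (s + ε) := by
    rw [← Real.mul_rpow (by norm_num) (by linarith)]
    exact Real.rpow_le_rpow (by positivity) hk_up hsε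
  calc μ (cubeSet (dyadicTriple n m).1 (M * (dyadicTriple n m).2))
      ≤ μ (cubeSet (dyadicAncestor k n m).1 (dyadicAncestor k n m).2) :=
        measure_mono (cubeSet_dilate_subset_ancestor n k m (by linarith))
    _ ≤ _ := ENNReal.le_ofReal_mul_of_toReal_le (measure_cubeSet_lt_top μ _ _).ne
        (measure_cubeSet_lt_top μ _ _).ne (by positivity) (hmass.le.trans (by gcongr))
end
end

section
/- Let μ be a smoothly reflectionless measure on ℝ^d, V a linear subspace, and x₀ ∈ supp(μ) with V + x₀ ⊂ supp(μ). Then for every y ∈ supp(μ), the plane V + y is contained in supp(μ). -/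
/-!
Test the reflectionless condition against `φ = ψ(· - c) - ψ(· + c)`, where `ψ` is a tent of
radius `ρ`: then `F(s - c) - F(s + c)` is the same for all `s ∈ supp μ`, where `F = ψ * μ` is
nonnegative and positive exactly at the points whose `ρ`-ball carries mass. If `x, y ∈ supp μ` but
`2y - x ∉ supp μ`, apply this along the progression `y + k (x - y)` with small `ρ`: it first puts
`y + 2 (x - y)` in the support and then forces `F` to be negative at `y - 3 (x - y)`. Hence the
support is symmetric about each of its points, and reflecting `y` first in `x₀` and then in
`x₀ + v / 2` gives `v + y`.
-/
open MeasureTheory Metric Set Filter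
noncomputable section

/-- The closed support of a measure: points all of whose balls have positive measure. -/
def msupp {d : ℕ} (μ : Measure (Pt d)) : Set (Pt d) :=
  {x | ∀ r : ℝ, 0 < r → 0 < μ (ball x r)}

/-- `μ` is smoothly reflectionless: for every odd compactly supported Lipschitz function `φ`,
the convolution `φ * μ` is constant on the support of `μ`. -/
def SmoothlyReflectionless {d : ℕ} (μ : Measure (Pt d)) : Prop :=
  ∀ φ : Pt d → ℝ, (∀ x, φ (-x) = -φ x) → HasCompactSupport φ →
    (∃ K : NNReal, LipschitzWith K φ) →
    ∃ Λ : ℝ, ∀ x ∈ msupp μ, (∫ y, φ (x - y) ∂μ) = Λ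

section Tent

variable {E : Type*} [SeminormedAddCommGroup E]

def tent (ρ : ℝ) (t : E) : ℝ := max (ρ - ‖t‖) 0

lemma tent_nonneg (ρ : ℝ) (t : E) : 0 ≤ tent ρ t := le_max_right _ _

@[simp]
lemma tent_neg (ρ : ℝ) (t : E) : tent ρ (-t) = tent ρ t := by
  simp [tent]

lemma tent_eq_zero_of_le_norm {ρ : ℝ} {t : E} (h : ρ ≤ ‖t‖) : tent ρ t = 0 :=
  max_eq_right (by linarith)

lemma tent_sub_comm (ρ : ℝ) (u w : E) : tent ρ (u - w) = tent ρ (w - u) := by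
  rw [← tent_neg, neg_sub]

lemma support_tent (ρ : ℝ) : Function.support (tent ρ : E → ℝ) = ball 0 ρ := by
  ext t
  simp [tent]

lemma lipschitzWith_tent (ρ : ℝ) : LipschitzWith 1 (tent ρ : E → ℝ) := by
  have h := ((LipschitzWith.const ρ).sub (lipschitzWith_one_norm (E := E))).max_const 0
  rwa [zero_add] at h

lemma hasCompactSupport_tent [ProperSpace E] (ρ : ℝ) : HasCompactSupport (tent ρ : E → ℝ) :=
  .intro (isCompact_closedBall 0 ρ) fun _ ht ↦
    tent_eq_zero_of_le_norm (lt_of_not_ge (by simpa using ht)).le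

variable [MeasurableSpace E] (μ : Measure E)

def tentConv (ρ : ℝ) (u : E) : ℝ := ∫ w, tent ρ (u - w) ∂μ

lemma tentConv_nonneg (ρ : ℝ) (u : E) : 0 ≤ tentConv μ ρ u :=
  integral_nonneg fun _ ↦ tent_nonneg _ _

variable [BorelSpace E] [ProperSpace E] [IsLocallyFiniteMeasure μ]

lemma integrable_tent_sub (ρ : ℝ) (u : E) : Integrable (fun w ↦ tent ρ (u - w)) μ := by
  have : (fun w ↦ tent ρ (u - w)) = tent ρ ∘ (Homeomorph.subRight u) := by
    ext w; exact tent_sub_comm ρ u w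
  rw [this]
  exact ((lipschitzWith_tent ρ).continuous.comp (Homeomorph.subRight u).continuous)
    |>.integrable_of_hasCompactSupport ((hasCompactSupport_tent ρ).comp_homeomorph _)

lemma tentConv_pos_iff (ρ : ℝ) (u : E) : 0 < tentConv μ ρ u ↔ 0 < μ (ball u ρ) := by
  have hsupp : Function.support (fun w ↦ tent ρ (u - w)) = ball u ρ := by
    ext w
    rw [Function.mem_support, ← Function.mem_support (f := tent ρ), support_tent, mem_ball_zero_iff,
      mem_ball, dist_eq_norm, ← norm_neg, neg_sub]
  rw [tentConv, integral_pos_iff_support_of_nonneg (fun w ↦ tent_nonneg _ _)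
    (integrable_tent_sub μ ρ u), hsupp]

lemma tentConv_eq_zero_of_measure_ball_eq_zero {ρ : ℝ} {u : E} (h : μ (ball u ρ) = 0) :
    tentConv μ ρ u = 0 :=
  le_antisymm (not_lt.1 fun hpos ↦ ((tentConv_pos_iff μ ρ u).1 hpos).ne' h) (tentConv_nonneg μ ρ u)

end Tent

section Reflectionless

variable {d : ℕ} {μ : Measure (Pt d)}

lemma mem_msupp_of_forall_le {u : Pt d} {r : ℝ} (hr : 0 < r)
    (h : ∀ ρ, 0 < ρ → ρ ≤ r → 0 < μ (ball u ρ)) : u ∈ msupp μ := fun s hs ↦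
  (h _ (lt_min hs hr) (min_le_right s r)).trans_le
    (measure_mono (ball_subset_ball (min_le_left s r)))

lemma exists_measure_ball_eq_zero_of_notMem_msupp {u : Pt d} (hu : u ∉ msupp μ) :
    ∃ r > 0, μ (ball u r) = 0 := by
  simpa [msupp] using hu

lemma SmoothlyReflectionless.tentConv_sub_sub_tentConv_add [IsLocallyFiniteMeasure μ]
    (hμ : SmoothlyReflectionless μ) {s t : Pt d} (hs : s ∈ msupp μ) (ht : t ∈ msupp μ)
    (ρ : ℝ) (c : Pt d) :
    tentConv μ ρ (s - c) - tentConv μ ρ (s + c) = tentConv μ ρ (t - c) - tentConv μ ρ (t + c) := by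
  set φ : Pt d → ℝ := fun u ↦ tent ρ (u - c) - tent ρ (u + c)
  have hodd (u : Pt d) : φ (-u) = -φ u := by
    simp only [φ]
    rw [show -u - c = -(u + c) by abel, show -u + c = -(u - c) by abel, tent_neg, tent_neg, neg_sub]
  have hcs : HasCompactSupport φ :=
    ((hasCompactSupport_tent ρ).comp_homeomorph (Homeomorph.subRight c)).sub
      ((hasCompactSupport_tent ρ).comp_homeomorph (Homeomorph.addRight c))
  have hlip : ∃ K, LipschitzWith K φ :=
    ⟨_, ((lipschitzWith_tent ρ).comp (LipschitzWith.id.sub (.const c))).sub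
      ((lipschitzWith_tent ρ).comp (LipschitzWith.id.add (.const c)))⟩
  obtain ⟨Λ, hΛ⟩ := hμ φ hodd hcs hlip
  have hconv (p : Pt d) :
      ∫ w, φ (p - w) ∂μ = tentConv μ ρ (p - c) - tentConv μ ρ (p + c) := by
    rw [tentConv, tentConv, ← integral_sub (integrable_tent_sub μ ρ _) (integrable_tent_sub μ ρ _)]
    congr 1 with w
    simp only [φ, sub_right_comm, sub_add_eq_add_sub]
  rw [← hconv, ← hconv, hΛ s hs, hΛ t ht]

lemma SmoothlyReflectionless.tentConv_progression [IsLocallyFiniteMeasure μ]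
    (hμ : SmoothlyReflectionless μ) {y h : Pt d} {s t : ℤ} (hs : y + s • h ∈ msupp μ)
    (ht : y + t • h ∈ msupp μ) (ρ : ℝ) (m : ℤ) :
    tentConv μ ρ (y + (s - m) • h) - tentConv μ ρ (y + (s + m) • h) =
      tentConv μ ρ (y + (t - m) • h) - tentConv μ ρ (y + (t + m) • h) := by
  simpa only [sub_smul, add_smul, add_sub_assoc, add_assoc] using
    hμ.tentConv_sub_sub_tentConv_add hs ht ρ (m • h)

theorem SmoothlyReflectionless.two_smul_sub_mem_msupp [IsLocallyFiniteMeasure μ]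
    (hμ : SmoothlyReflectionless μ) {x y : Pt d} (hx : x ∈ msupp μ) (hy : y ∈ msupp μ) :
    2 • y - x ∈ msupp μ := by
  by_contra hz
  obtain ⟨r, hr, hzr⟩ := exists_measure_ball_eq_zero_of_notMem_msupp hz
  set h := x - y
  set a : ℝ → ℤ → ℝ := fun ρ k ↦ tentConv μ ρ (y + k • h)
  have hrel {s t : ℤ} (hs : y + s • h ∈ msupp μ) (ht : y + t • h ∈ msupp μ) (ρ : ℝ) (m : ℤ) :
      a ρ (s - m) - a ρ (s + m) = a ρ (t - m) - a ρ (t + m) :=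
    hμ.tentConv_progression hs ht ρ m
  have h0 : y + (0 : ℤ) • h ∈ msupp μ := by simpa using hy
  have h1 : y + (1 : ℤ) • h ∈ msupp μ := by simpa [h] using hx
  have ha1 (ρ : ℝ) (hρ : 0 < ρ) : 0 < a ρ 1 := (tentConv_pos_iff μ ρ _).2 (h1 ρ hρ)
  have ha_neg_one (ρ : ℝ) (hρ : ρ ≤ r) : a ρ (-1) = 0 := by
    refine tentConv_eq_zero_of_measure_ball_eq_zero μ (measure_mono_null ?_ hzr)
    rw [show y + (-1 : ℤ) • h = 2 • y - x by simp only [h, neg_smul, one_smul, two_smul]; abel]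
    exact ball_subset_ball hρ
  have h2 : y + (2 : ℤ) • h ∈ msupp μ := by
    refine mem_msupp_of_forall_le hr fun ρ hρ hρr ↦ (tentConv_pos_iff μ ρ _).1 ?_
    change 0 < a ρ 2
    have := hrel h1 h0 ρ 1
    norm_num at this
    linarith [ha1 ρ hρ, ha_neg_one ρ hρr, (tentConv_nonneg μ ρ _ : 0 ≤ a ρ 0)]
  -- `a₂ = a₀ + a₁`, `a₃ = 2a₁`, `a₋₂ = a₀ - a₁`, `a₄ = a₀ + 2a₁`, hence `a₋₃ = -a₁ < 0`
  have e1 := hrel h1 h0 r 1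
  have e2 := hrel h2 h0 r 1
  have e3 := hrel h1 h0 r 2
  have e4 := hrel h2 h0 r 2
  have e5 := hrel h1 h0 r 3
  norm_num at e1 e2 e3 e4 e5
  linarith [ha1 r hr, ha_neg_one r le_rfl, (tentConv_nonneg μ r _ : 0 ≤ a r (-3))]

end Reflectionless

theorem plane_propagates_general (d : ℕ) (μ : Measure (Pt d)) (hloc : IsLocallyFiniteMeasure μ)
    (hrefl : SmoothlyReflectionless μ) (V : Submodule ℝ (Pt d)) (x₀ : Pt d)
    (hV : ∀ v ∈ V, v + x₀ ∈ msupp μ) :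
    ∀ y ∈ msupp μ, ∀ v ∈ V, v + y ∈ msupp μ := by
  intro y hy v hv
  have hx₀ : x₀ ∈ msupp μ := by simpa using hV 0 V.zero_mem
  have hmid : (2⁻¹ : ℝ) • v + x₀ ∈ msupp μ := hV _ (V.smul_mem _ hv)
  have hy' : 2 • x₀ - y ∈ msupp μ := hrefl.two_smul_sub_mem_msupp hy hx₀
  convert hrefl.two_smul_sub_mem_msupp hy' hmid using 1
  module

/-- If `V + x₀ ⊆ supp μ` for some `x₀ ∈ supp μ`, then `V + y ⊆ supp μ` for every
`y ∈ supp μ`. -/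
theorem plane_propagates (d : ℕ) (μ : Measure (Pt d)) (hloc : IsLocallyFiniteMeasure μ)
    (hrefl : SmoothlyReflectionless μ) (V : Submodule ℝ (Pt d)) (x₀ : Pt d)
    (hx₀ : x₀ ∈ msupp μ) (hV : ∀ v ∈ V, v + x₀ ∈ msupp μ) :
    ∀ y ∈ msupp μ, ∀ v ∈ V, v + y ∈ msupp μ :=
  plane_propagates_general d μ hloc hrefl V x₀ hV
end
end
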